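/- Under the same setting with Z(2β) twice differentiable, ‖a†(f) a(f) e^{−βH_B}‖²_HS ≤ ‖f‖⁴ [ (1/m²)(d²/d(2β)²) − (1/m)(d/d(2β)) ] Z(2β). -/

import Mathlib

/-!
In the occupation-number basis,
`a†(f) a(f) |n⟩ = D |n⟩ + ∑_{j ≠ k} f_j f̄_k √(n_j + 1) √n_k |n - e_k + e_j⟩`
with `D = ∑ₖ |f_k|² n_k`, and the vectors `|n - e_k + e_j⟩` are pairwise distinct. Hence
`‖a†(f) a(f) |n⟩‖² = D² + (D + ‖f‖²) D - ∑ₖ |f_k|⁴ n_k (n_k + 1)`, which Cauchy–Schwarz bounds by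
`‖f‖⁴ (N² + N)` with `N = ∑ₖ n_k ≤ E_n / m`. As `e^{-βH_B}` is diagonal, the Hilbert–Schmidt norm is
at most `‖f‖⁴ ∑ₙ (E_n² / m² + E_n / m) e^{-2βE_n}`, and termwise differentiation of
`Z(s) = ∑ₙ e^{-s E_n}` identifies these sums with `Z''(2β)` and `-Z'(2β)`. All series converge since
`Z(s) ≤ ∏ₖ (1 - e^{-sω_k})⁻¹ < ∞` for `s > 0`.
-/

/-- The occupancy-number basis vector `|n⟩` of the Bose–Fock space. -/
def fockBasis (n : ℕ →₀ ℕ) : (ℕ →₀ ℕ) → ℂ := fun m => if m = n then 1 else 0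

/-- The smeared annihilation operator `a(f) = ∑ₖ f̄ₖ aₖ` on coefficient functions. -/
noncomputable def fockAnn (f : ℕ → ℂ) (ψ : (ℕ →₀ ℕ) → ℂ) : (ℕ →₀ ℕ) → ℂ :=
  fun m => ∑' k : ℕ,
    (starRingEnd ℂ) (f k) * (Real.sqrt ((m k : ℝ) + 1) : ℂ) * ψ (m + Finsupp.single k 1)

/-- The smeared creation operator `a†(f) = ∑ₖ fₖ aₖ†` on coefficient functions. -/
noncomputable def fockCre (f : ℕ → ℂ) (ψ : (ℕ →₀ ℕ) → ℂ) : (ℕ →₀ ℕ) → ℂ :=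
  fun m => ∑' k : ℕ, f k * (Real.sqrt (m k : ℝ) : ℂ) * ψ (m - Finsupp.single k 1)

/-- The Gibbs exponential `e^{−βH_B}` acting diagonally on the occupancy number basis. -/
noncomputable def fockGibbs (β : ℝ) (ω : ℕ → ℝ) (ψ : (ℕ →₀ ℕ) → ℂ) : (ℕ →₀ ℕ) → ℂ :=
  fun m => ((Real.exp (-β * (m.sum fun k v => ω k * (v : ℝ))) : ℝ) : ℂ) * ψ m

/-- The partition function `Z(s) = tr e^{−sH_B} = ∑_n e^{−s ∑ₖ nₖωₖ}` as a function of `s`. -/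
noncomputable def Ztr (ω : ℕ → ℝ) : ℝ → ℝ :=
  fun s => ∑' n : ℕ →₀ ℕ, Real.exp (-s * (n.sum fun k v => ω k * (v : ℝ)))


open Finset Real

section Summability

variable {ι : Type*}

theorem Finset.sum_finsupp_prod {α R : Type*} [Zero α] [CommSemiring R] (s : Finset ι)
    (t : ι → Finset α) (g : ι → α → R) (hg : ∀ i, g i 0 = 1) :
    ∑ n ∈ s.finsupp t, n.prod g = ∏ i ∈ s, ∑ v ∈ t i, g i v := by
  classical
  rw [Finset.prod_sum, Finset.finsupp, Finset.sum_map]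
  refine Finset.sum_congr rfl fun p _ => ?_
  rw [Function.Embedding.coeFn_mk,
    Finsupp.prod_of_support_subset _ (Finsupp.support_indicator_subset s p) _ fun i _ => hg i,
    ← Finset.prod_attach]
  exact Finset.prod_congr rfl fun i _ => by rw [Finsupp.indicator_of_mem i.2]

theorem inv_one_sub_le_exp {x r : ℝ} (hx0 : 0 ≤ x) (hx : x ≤ r) (hr : r < 1) :
    (1 - x)⁻¹ ≤ exp ((1 - r)⁻¹ * x) := by
  have hx' : 0 < 1 - x := by linarith
  calc (1 - x)⁻¹ = 1 + x / (1 - x) := by field_simp; ring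
    _ ≤ 1 + (1 - r)⁻¹ * x := by
        rw [div_eq_inv_mul]
        gcongr
    _ ≤ exp ((1 - r)⁻¹ * x) := by linarith [add_one_le_exp ((1 - r)⁻¹ * x)]

theorem summable_finsupp_prod_pow {y : ι → ℝ} {r : ℝ} (hy0 : ∀ k, 0 ≤ y k) (hyr : ∀ k, y k ≤ r)
    (hr : r < 1) (hy : Summable y) :
    Summable fun n : ι →₀ ℕ => n.prod fun k v => y k ^ v := by
  classical
  refine summable_of_sum_le (c := exp ((1 - r)⁻¹ * ∑' k, y k))
    (fun n => Finset.prod_nonneg fun k _ => pow_nonneg (hy0 k) _) fun u => ?_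
  set K := u.sup Finsupp.support
  set M := u.sup Finsupp.degree
  have hu : u ⊆ K.finsupp fun _ => range (M + 1) := fun n hn =>
    Finset.mem_finsupp_iff.2 ⟨Finset.le_sup (f := Finsupp.support) hn, fun i _ =>
      mem_range_succ_iff.2 ((Finsupp.le_degree i n).trans (Finset.le_sup hn))⟩
  calc ∑ n ∈ u, n.prod (fun k v => y k ^ v)
      ≤ ∑ n ∈ K.finsupp fun _ => range (M + 1), n.prod (fun k v => y k ^ v) :=
        sum_le_sum_of_subset_of_nonneg hu fun n _ _ =>
          Finset.prod_nonneg fun k _ => pow_nonneg (hy0 k) _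
    _ = ∏ k ∈ K, ∑ v ∈ range (M + 1), y k ^ v := Finset.sum_finsupp_prod _ _ _ fun k => pow_zero _
    _ ≤ ∏ k ∈ K, exp ((1 - r)⁻¹ * y k) := by
        refine prod_le_prod (fun k _ => sum_nonneg fun v _ => pow_nonneg (hy0 k) _) fun k _ => ?_
        calc ∑ v ∈ range (M + 1), y k ^ v ≤ y k ^ 0 / (1 - y k) := by
              simpa using geom_sum_Ico_le_of_lt_one (m := 0) (n := M + 1) (hy0 k)
                ((hyr k).trans_lt hr)
          _ = (1 - y k)⁻¹ := by rw [pow_zero, one_div]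
          _ ≤ exp ((1 - r)⁻¹ * y k) := inv_one_sub_le_exp (hy0 k) (hyr k) hr
    _ = exp ((1 - r)⁻¹ * ∑ k ∈ K, y k) := by rw [mul_sum, exp_sum]
    _ ≤ exp ((1 - r)⁻¹ * ∑' k, y k) := by
        gcongr
        exact hy.sum_le_tsum K fun k _ => hy0 k

theorem Finsupp.sum_mul_eq_weight (ω : ι → ℝ) (n : ι →₀ ℕ) :
    (n.sum fun k v => ω k * (v : ℝ)) = Finsupp.weight ω n := by
  simp only [Finsupp.weight_apply, nsmul_eq_mul, mul_comm]

theorem exp_neg_mul_weight (ω : ι → ℝ) (s : ℝ) (n : ι →₀ ℕ) :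
    exp (-s * Finsupp.weight ω n) = n.prod fun k v => exp (-s * ω k) ^ v := by
  rw [Finsupp.weight_apply, Finsupp.sum, mul_sum, exp_sum, Finsupp.prod]
  refine prod_congr rfl fun k _ => ?_
  rw [← exp_nat_mul, nsmul_eq_mul]
  ring_nf

theorem mul_degree_le_weight {ω : ι → ℝ} {m : ℝ} (hω : ∀ k, m ≤ ω k) (n : ι →₀ ℕ) :
    m * n.degree ≤ Finsupp.weight ω n := by
  rw [Finsupp.degree_apply, Finsupp.weight_apply, Finsupp.sum, Nat.cast_sum, mul_sum]
  refine sum_le_sum fun k _ => ?_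
  rw [nsmul_eq_mul, mul_comm]
  exact mul_le_mul_of_nonneg_left (hω k) (Nat.cast_nonneg _)

theorem weight_nonneg_of_le {ω : ι → ℝ} {m : ℝ} (hm : 0 ≤ m) (hω : ∀ k, m ≤ ω k) (n : ι →₀ ℕ) :
    0 ≤ Finsupp.weight ω n :=
  (mul_nonneg hm (Nat.cast_nonneg _)).trans (mul_degree_le_weight hω n)

theorem summable_exp_neg_mul_weight {ω : ι → ℝ} {m : ℝ} (hm : 0 < m) (hω : ∀ k, m ≤ ω k)
    (hsum : ∀ b > 0, Summable fun k => exp (-b * ω k)) {s : ℝ} (hs : 0 < s) :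
    Summable fun n : ι →₀ ℕ => exp (-s * Finsupp.weight ω n) := by
  simp_rw [exp_neg_mul_weight]
  exact summable_finsupp_prod_pow (r := exp (-s * m)) (fun k => (exp_pos _).le)
    (fun k => exp_le_exp.2 (by have := hω k; nlinarith))
    (exp_lt_one_iff.2 (by have := mul_pos hs hm; linarith)) (hsum s hs)

end Summability

section LaplaceSums

variable {ι : Type*} {E : ι → ℝ}

theorem summable_pow_mul_exp_neg (hE : ∀ i, 0 ≤ E i)
    (hsum : ∀ s > 0, Summable fun i => exp (-s * E i)) (p : ℕ) {s : ℝ} (hs : 0 < s) :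
    Summable fun i => E i ^ p * exp (-s * E i) := by
  refine .of_nonneg_of_le (fun i => by have := hE i; positivity) (fun i => ?_)
    ((hsum (s / 2) (half_pos hs)).mul_left (p.factorial / (s / 2) ^ p))
  have hE' := hE i
  have hpow : E i ^ p ≤ p.factorial / (s / 2) ^ p * exp (s / 2 * E i) := by
    have := pow_div_factorial_le_exp (s / 2 * E i) (by positivity) p
    rw [div_le_iff₀ (by positivity), mul_pow] at this
    rw [div_mul_eq_mul_div, le_div_iff₀ (by positivity)]
    linarith
  calc E i ^ p * exp (-s * E i)
      ≤ p.factorial / (s / 2) ^ p * exp (s / 2 * E i) * exp (-s * E i) := by gcongr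
    _ = p.factorial / (s / 2) ^ p * exp (-(s / 2) * E i) := by
        rw [mul_assoc, ← exp_add]
        ring_nf

theorem hasDerivAt_tsum_pow_mul_exp_neg (hE : ∀ i, 0 ≤ E i)
    (hsum : ∀ s > 0, Summable fun i => exp (-s * E i)) (p : ℕ) {s : ℝ} (hs : 0 < s) :
    HasDerivAt (fun t => ∑' i, E i ^ p * exp (-t * E i))
      (-∑' i, E i ^ (p + 1) * exp (-s * E i)) s := by
  have hs2 : s / 2 < s := half_lt_self hs
  rw [← tsum_neg]
  refine hasDerivAt_tsum_of_isPreconnected (t := Set.Ioi (s / 2))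
    (g := fun i t => E i ^ p * exp (-t * E i))
    (g' := fun i t => -(E i ^ (p + 1) * exp (-t * E i)))
    (summable_pow_mul_exp_neg hE hsum (p + 1) (half_pos hs)) isOpen_Ioi isPreconnected_Ioi
    (fun i t _ => ?_) (fun i t ht => ?_) hs2 (summable_pow_mul_exp_neg hE hsum p hs) hs2
  · exact (((hasDerivAt_neg t).mul_const (E i)).exp.const_mul (E i ^ p)).congr_deriv (by ring)
  · have hE' := hE i
    rw [norm_neg, Real.norm_of_nonneg (by positivity)]
    gcongr
    exact le_of_lt ht

end LaplaceSums

section PartitionFunctionDerivatives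

variable {ω : ℕ → ℝ} {m : ℝ}

theorem Ztr_eq_tsum_weight (ω : ℕ → ℝ) :
    Ztr ω = fun s => ∑' n : ℕ →₀ ℕ, exp (-s * Finsupp.weight ω n) := by
  unfold Ztr
  simp only [Finsupp.sum_mul_eq_weight]

theorem hasDerivAt_Ztr (hm : 0 < m) (hω : ∀ k, m ≤ ω k)
    (hsum : ∀ b > 0, Summable fun k => exp (-b * ω k)) {s : ℝ} (hs : 0 < s) :
    HasDerivAt (Ztr ω) (-∑' n : ℕ →₀ ℕ, Finsupp.weight ω n * exp (-s * Finsupp.weight ω n)) s := by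
  have := hasDerivAt_tsum_pow_mul_exp_neg (E := fun n : ℕ →₀ ℕ => Finsupp.weight ω n)
    (weight_nonneg_of_le hm.le hω) (fun _ => summable_exp_neg_mul_weight hm hω hsum) 0 hs
  simpa only [pow_zero, one_mul, zero_add, pow_one, ← Ztr_eq_tsum_weight] using this

theorem deriv_deriv_Ztr (hm : 0 < m) (hω : ∀ k, m ≤ ω k)
    (hsum : ∀ b > 0, Summable fun k => exp (-b * ω k)) {s : ℝ} (hs : 0 < s) :
    deriv (deriv (Ztr ω)) s =
      ∑' n : ℕ →₀ ℕ, Finsupp.weight ω n ^ 2 * exp (-s * Finsupp.weight ω n) := by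
  have hderiv : deriv (Ztr ω) =ᶠ[nhds s]
      fun t => -∑' n : ℕ →₀ ℕ, Finsupp.weight ω n ^ 1 * exp (-t * Finsupp.weight ω n) := by
    filter_upwards [lt_mem_nhds hs] with t ht
    simpa only [pow_one] using (hasDerivAt_Ztr hm hω hsum ht).deriv
  rw [hderiv.deriv_eq, ((hasDerivAt_tsum_pow_mul_exp_neg (E := fun n : ℕ →₀ ℕ => Finsupp.weight ω n)
    (weight_nonneg_of_le hm.le hω) (fun _ => summable_exp_neg_mul_weight hm hω hsum) 1
      hs).fun_neg).deriv, neg_neg]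

end PartitionFunctionDerivatives

theorem Finset.two_mul_sq_sum_mul_sub_sum_sq_le {ι : Type*} {s : Finset ι} {a ν : ι → ℝ} {F : ℝ}
    (ha : ∀ i ∈ s, 0 ≤ a i) (hν : ∀ i ∈ s, 0 ≤ ν i) (hF : ∑ i ∈ s, a i ≤ F) :
    2 * (∑ i ∈ s, a i * ν i) ^ 2 - ∑ i ∈ s, (a i * ν i) ^ 2 ≤ F ^ 2 * (∑ i ∈ s, ν i) ^ 2 := by
  have hcs : (∑ i ∈ s, a i * ν i) ^ 2 ≤ F * ∑ i ∈ s, a i * ν i ^ 2 :=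
    (sum_sq_le_sum_mul_sum_of_sq_le_mul s ha (fun i hi => by have := ha i hi; positivity)
      fun i _ => le_of_eq (by ring)).trans
      (mul_le_mul_of_nonneg_right hF (sum_nonneg fun i hi => by have := ha i hi; positivity))
  calc 2 * (∑ i ∈ s, a i * ν i) ^ 2 - ∑ i ∈ s, (a i * ν i) ^ 2
      ≤ ∑ i ∈ s, (2 * F * (a i * ν i ^ 2) - (a i * ν i) ^ 2) := by
        rw [sum_sub_distrib, ← mul_sum]
        linarith
    _ ≤ ∑ i ∈ s, F ^ 2 * ν i ^ 2 :=
        sum_le_sum fun i _ => by nlinarith [sq_nonneg ((F - a i) * ν i)]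
    _ ≤ F ^ 2 * (∑ i ∈ s, ν i) ^ 2 := by
        rw [← mul_sum]
        exact mul_le_mul_of_nonneg_left (sum_sq_le_sq_sum_of_nonneg hν) (sq_nonneg F)

section Hopping

open Finsupp

/-- `a_j† a_k |n⟩` is a multiple of `|hop n j k⟩`. -/
noncomputable def hop (n : ℕ →₀ ℕ) (j k : ℕ) : ℕ →₀ ℕ := n - single k 1 + single j 1

/-- Indexes the basis vectors other than `|n⟩` in the expansion of `a†(f) a(f) |n⟩`. -/
def hopPairs (n : ℕ →₀ ℕ) : Set (ℕ × ℕ) := {p | p.1 ≠ p.2 ∧ p.2 ∈ n.support}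

variable {n : ℕ →₀ ℕ} {j k : ℕ}

theorem hop_add_single (hk : k ∈ n.support) : hop n j k + single k 1 = n + single j 1 := by
  rw [hop, add_right_comm, tsub_add_cancel_of_le (single_le_iff.2 (Nat.one_le_iff_ne_zero.2
    (mem_support_iff.1 hk)))]

theorem hop_apply_left (hjk : j ≠ k) : hop n j k j = n j + 1 := by
  simp [hop, hjk.symm]

theorem hop_sub_single : hop n j k - single j 1 = n - single k 1 :=
  add_tsub_cancel_right _ _

theorem hop_ne_self (hjk : j ≠ k) : hop n j k ≠ n := fun h => by
  simpa [h] using (hop_apply_left (n := n) hjk).symm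

theorem injOn_hop_hopPairs (n : ℕ →₀ ℕ) : Set.InjOn (fun p => hop n p.1 p.2) (hopPairs n) := by
  rintro ⟨j, k⟩ ⟨hjk, hk⟩ ⟨j', k'⟩ ⟨-, hk'⟩ h
  simp only at h hjk hk hk'
  have h' : single j 1 + single k' 1 = single j' 1 + single k 1 := by
    apply add_left_cancel (a := n)
    calc n + (single j 1 + single k' 1) = hop n j k + single k 1 + single k' 1 := by
          rw [hop_add_single hk]; abel
      _ = hop n j' k' + single k' 1 + single k 1 := by rw [h]; abel
      _ = n + (single j' 1 + single k 1) := by rw [hop_add_single hk']; abel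
  rcases (single_add_single_eq_single_add_single one_ne_zero one_ne_zero).1 h' with
    ⟨rfl, rfl⟩ | ⟨-, rfl, -⟩ | ⟨h0, -⟩
  · rfl
  · exact absurd rfl hjk
  · exact absurd h0 (by norm_num)

end Hopping

-- The full product `(∑ₖ a_k (n_k + 1)) (∑ₖ a_k n_k)` minus its diagonal.
theorem hasSum_indicator_hopPairs {a : ℕ → ℝ} {F : ℝ} (ha : ∀ k, 0 ≤ a k) (hF : HasSum a F)
    (n : ℕ →₀ ℕ) :
    HasSum ((hopPairs n).indicator fun p => a p.1 * (n p.1 + 1) * (a p.2 * n p.2))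
      ((∑ k ∈ n.support, a k * n k + F) * ∑ k ∈ n.support, a k * n k
        - ∑ k ∈ n.support, a k * (n k + 1) * (a k * n k)) := by
  set g : ℕ × ℕ → ℝ := fun p => a p.1 * (n p.1 + 1) * (a p.2 * n p.2)
  have hD : HasSum (fun k => a k * n k) (∑ k ∈ n.support, a k * n k) :=
    hasSum_sum_of_ne_finset_zero fun k hk => by simp [Finsupp.notMem_support_iff.1 hk]
  have hDF : HasSum (fun k => a k * (n k + 1)) (∑ k ∈ n.support, a k * n k + F) := by
    simpa only [mul_add, mul_one] using hD.add hF
  have hg : HasSum g _ := hDF.mul hD <| hDF.summable.mul_of_nonneg hD.summable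
    (fun k => by have := ha k; positivity) fun k => by have := ha k; positivity
  have hdiag : HasSum (fun p : ℕ × ℕ => if p.1 = p.2 then g p else 0)
      (∑ k ∈ n.support, g (k, k)) := by
    refine (Function.Injective.hasSum_iff (g := fun k => (k, k))
      (fun k k' h => congrArg Prod.fst h) ?_).1 ?_
    · rintro ⟨j, k⟩ h
      simp only [Set.mem_range, not_exists] at h
      rw [if_neg fun hjk : j = k => h j (by rw [hjk])]
    · have hcomp : (fun p : ℕ × ℕ => if p.1 = p.2 then g p else 0) ∘ (fun k => (k, k)) =
          fun k => g (k, k) := funext fun k => if_pos rfl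
      rw [hcomp]
      exact hasSum_sum_of_ne_finset_zero fun k hk => by
        simp [g, Finsupp.notMem_support_iff.1 hk]
  have hoff : (hopPairs n).indicator g = fun p => g p - if p.1 = p.2 then g p else 0 := by
    funext ⟨j, k⟩
    by_cases hjk : j = k
    · subst hjk
      simp [hopPairs]
    · by_cases hk : n k = 0
      · simp [hopPairs, hk, g]
      · simp [hopPairs, hjk, hk]
  rw [hoff]
  exact hg.sub hdiag

section FockOperators

open Finsupp ComplexConjugate

variable (f : ℕ → ℂ)

theorem fockAnn_smul (c : ℂ) (ψ : (ℕ →₀ ℕ) → ℂ) : fockAnn f (c • ψ) = c • fockAnn f ψ := by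
  funext m
  simp only [fockAnn, Pi.smul_apply, smul_eq_mul, ← tsum_mul_left]
  exact tsum_congr fun k => by ring

theorem fockCre_smul (c : ℂ) (ψ : (ℕ →₀ ℕ) → ℂ) : fockCre f (c • ψ) = c • fockCre f ψ := by
  funext m
  simp only [fockCre, Pi.smul_apply, smul_eq_mul, ← tsum_mul_left]
  exact tsum_congr fun k => by ring

theorem fockGibbs_fockBasis (β : ℝ) (ω : ℕ → ℝ) (n : ℕ →₀ ℕ) :
    fockGibbs β ω (fockBasis n) = ((exp (-β * weight ω n) : ℝ) : ℂ) • fockBasis n := by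
  funext x
  by_cases h : x = n
  · simp only [fockGibbs, Pi.smul_apply, smul_eq_mul, sum_mul_eq_weight, h]
  · simp [fockGibbs, fockBasis, h]

variable {f} {n m : ℕ →₀ ℕ}

theorem fockAnn_fockBasis_of_add_single {k : ℕ} (h : m + single k 1 = n) :
    fockAnn f (fockBasis n) m = conj (f k) * √((m k : ℝ) + 1) := by
  unfold fockAnn
  rw [tsum_eq_single k]
  · simp [fockBasis, h]
  · intro k' hk'
    have : m + single k' 1 ≠ n := fun h' =>
      hk' (single_left_injective one_ne_zero (add_left_cancel (h'.trans h.symm)))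
    simp [fockBasis, this]

theorem fockAnn_fockBasis_eq_zero (h : ∀ k, m + single k 1 ≠ n) :
    fockAnn f (fockBasis n) m = 0 := by
  simp [fockAnn, fockBasis, h]

theorem fockAnn_fockBasis_sub_single {k : ℕ} (hk : k ∈ n.support) :
    fockAnn f (fockBasis n) (n - single k 1) = conj (f k) * √(n k : ℝ) := by
  have hk1 : 1 ≤ n k := Nat.one_le_iff_ne_zero.2 (mem_support_iff.1 hk)
  rw [fockAnn_fockBasis_of_add_single (tsub_add_cancel_of_le (single_le_iff.2 hk1))]
  simp [Nat.cast_sub hk1]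

theorem fockCre_fockAnn_fockBasis_self :
    fockCre f (fockAnn f (fockBasis n)) n = ∑ j ∈ n.support, ((‖f j‖ ^ 2 * n j : ℝ) : ℂ) := by
  unfold fockCre
  rw [tsum_eq_sum (s := n.support) fun j hj => by simp [notMem_support_iff.1 hj]]
  refine sum_congr rfl fun j hj => ?_
  rw [fockAnn_fockBasis_sub_single hj]
  calc f j * √(n j : ℝ) * (conj (f j) * √(n j : ℝ))
      = f j * conj (f j) * ((√(n j : ℝ) * √(n j : ℝ) : ℝ) : ℂ) := by push_cast; ring
    _ = ((‖f j‖ ^ 2 * n j : ℝ) : ℂ) := by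
      rw [Complex.mul_conj', Real.mul_self_sqrt (Nat.cast_nonneg _)]
      push_cast
      ring

theorem fockCre_fockAnn_fockBasis_hop {j k : ℕ} (hjk : j ≠ k) (hk : k ∈ n.support) :
    fockCre f (fockAnn f (fockBasis n)) (hop n j k) =
      f j * √((n j : ℝ) + 1) * (conj (f k) * √(n k : ℝ)) := by
  unfold fockCre
  rw [tsum_eq_single j, hop_sub_single, fockAnn_fockBasis_sub_single hk, hop_apply_left hjk]
  · push_cast; rfl
  · intro j' hj'
    rw [fockAnn_fockBasis_eq_zero, mul_zero]
    intro k' h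
    have := DFunLike.congr_fun h j
    simp [hop_apply_left hjk, single_apply, hj'.symm] at this
    omega

theorem fockCre_fockAnn_fockBasis_eq_zero {x : ℕ →₀ ℕ} (hxn : x ≠ n)
    (hx : ∀ p ∈ hopPairs n, hop n p.1 p.2 ≠ x) : fockCre f (fockAnn f (fockBasis n)) x = 0 := by
  unfold fockCre
  refine (tsum_congr fun j => ?_).trans tsum_zero
  by_cases hxj : x j = 0
  · simp [hxj]
  rw [fockAnn_fockBasis_eq_zero, mul_zero]
  intro k h
  have hx' : x - single j 1 + single j 1 = x :=
    tsub_add_cancel_of_le (single_le_iff.2 (Nat.one_le_iff_ne_zero.2 hxj))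
  by_cases hjk : j = k
  · subst hjk
    exact hxn (hx'.symm.trans h)
  · refine hx (j, k) ⟨hjk, ?_⟩ ?_
    · have := DFunLike.congr_fun h k
      simp only [Finsupp.coe_add, Finsupp.coe_tsub, Pi.add_apply, Pi.sub_apply,
        single_eq_same] at this
      simp only [mem_support_iff]
      omega
    · rw [hop, ← h, add_tsub_cancel_right, hx']

end FockOperators

section HilbertSchmidt

open Finsupp ComplexConjugate

variable {f : ℕ → ℂ}

theorem hasSum_norm_sq_fockCre_fockAnn_fockBasis (hf : Summable fun k => ‖f k‖ ^ 2)
    (n : ℕ →₀ ℕ) :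
    HasSum (fun x => ‖fockCre f (fockAnn f (fockBasis n)) x‖ ^ 2)
      ((∑ k ∈ n.support, ‖f k‖ ^ 2 * n k) ^ 2 +
        ((∑ k ∈ n.support, ‖f k‖ ^ 2 * n k + ∑' k, ‖f k‖ ^ 2) * ∑ k ∈ n.support, ‖f k‖ ^ 2 * n k
          - ∑ k ∈ n.support, ‖f k‖ ^ 2 * (n k + 1) * (‖f k‖ ^ 2 * n k))) := by
  set H := fockCre f (fockAnn f (fockBasis n)) with hH
  have hself : HasSum (fun x => if x = n then ‖H n‖ ^ 2 else 0)
      ((∑ k ∈ n.support, ‖f k‖ ^ 2 * n k) ^ 2) := by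
    rw [hH, fockCre_fockAnn_fockBasis_self, ← Complex.ofReal_sum, Complex.norm_real,
      Real.norm_of_nonneg (Finset.sum_nonneg fun k _ => by positivity)]
    exact hasSum_ite_eq n _
  have hoff : HasSum (fun x => if x = n then 0 else ‖H x‖ ^ 2)
      ((∑ k ∈ n.support, ‖f k‖ ^ 2 * n k + ∑' k, ‖f k‖ ^ 2) * ∑ k ∈ n.support, ‖f k‖ ^ 2 * n k
          - ∑ k ∈ n.support, ‖f k‖ ^ 2 * (n k + 1) * (‖f k‖ ^ 2 * n k)) := by
    refine (Function.Injective.hasSum_iff (injOn_hop_hopPairs n).injective ?_).1 ?_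
    · intro x hx
      split_ifs with hxn
      · rfl
      · rw [hH, fockCre_fockAnn_fockBasis_eq_zero hxn fun p hp hpx => hx ⟨⟨p, hp⟩, hpx⟩]
        simp
    · refine hasSum_subtype_iff_indicator.2
        (hasSum_indicator_hopPairs (fun k => sq_nonneg ‖f k‖) hf.hasSum n) |>.congr_fun ?_
      rintro ⟨⟨j, k⟩, hp⟩
      obtain ⟨hjk, hk⟩ : j ≠ k ∧ k ∈ n.support := hp
      change (if hop n j k = n then 0 else ‖H (hop n j k)‖ ^ 2) = _
      rw [if_neg (hop_ne_self hjk), hH, fockCre_fockAnn_fockBasis_hop hjk hk]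
      simp only [norm_mul]
      rw [RCLike.norm_conj, Complex.norm_real, Complex.norm_real,
        Real.norm_of_nonneg (sqrt_nonneg _), Real.norm_of_nonneg (sqrt_nonneg _)]
      simp only [mul_pow, sq_sqrt (by positivity : (0 : ℝ) ≤ n j + 1), sq_sqrt (Nat.cast_nonneg _),
        Function.comp_apply]
  convert hself.add hoff using 1
  funext x
  split_ifs with hxn
  · rw [hxn, add_zero]
  · rw [zero_add]

theorem tsum_norm_sq_fockCre_fockAnn_fockBasis_le (hf : Summable fun k => ‖f k‖ ^ 2)
    (n : ℕ →₀ ℕ) :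
    ∑' x, ‖fockCre f (fockAnn f (fockBasis n)) x‖ ^ 2 ≤
      (∑' k, ‖f k‖ ^ 2) ^ 2 * ((n.degree : ℝ) ^ 2 + n.degree) := by
  rw [(hasSum_norm_sq_fockCre_fockAnn_fockBasis hf n).tsum_eq]
  set F := ∑' k, ‖f k‖ ^ 2
  set D := ∑ k ∈ n.support, ‖f k‖ ^ 2 * n k
  have hF0 : 0 ≤ F := tsum_nonneg fun k => sq_nonneg _
  have hN : (n.degree : ℝ) = ∑ k ∈ n.support, (n k : ℝ) := by rw [degree_apply, Nat.cast_sum]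
  have hsq : 2 * D ^ 2 - ∑ k ∈ n.support, (‖f k‖ ^ 2 * n k) ^ 2 ≤ F ^ 2 * (n.degree : ℝ) ^ 2 :=
    hN ▸ two_mul_sq_sum_mul_sub_sum_sq_le (fun _ _ => sq_nonneg _) (fun _ _ => Nat.cast_nonneg _)
      (hf.sum_le_tsum _ fun k _ => sq_nonneg _)
  have hlin : D ≤ F * n.degree := by
    rw [hN, Finset.mul_sum]
    exact sum_le_sum fun k _ => mul_le_mul_of_nonneg_right
      (hf.le_tsum k fun _ _ => sq_nonneg _) (Nat.cast_nonneg _)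
  have hdiag : ∑ k ∈ n.support, (‖f k‖ ^ 2 * n k) ^ 2 ≤
      ∑ k ∈ n.support, ‖f k‖ ^ 2 * (n k + 1) * (‖f k‖ ^ 2 * n k) :=
    sum_le_sum fun k _ => by
      nlinarith [mul_nonneg (sq_nonneg (‖f k‖ ^ 2)) (Nat.cast_nonneg (α := ℝ) (n k))]
  nlinarith [mul_le_mul_of_nonneg_left hlin hF0]

theorem tsum_norm_sq_fockCre_fockAnn_fockGibbs_fockBasis (β : ℝ) (ω : ℕ → ℝ) (n : ℕ →₀ ℕ) :
    ∑' x, ‖fockCre f (fockAnn f (fockGibbs β ω (fockBasis n))) x‖ ^ 2 =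
      exp (-(2 * β) * weight ω n) * ∑' x, ‖fockCre f (fockAnn f (fockBasis n)) x‖ ^ 2 := by
  rw [fockGibbs_fockBasis, fockAnn_smul, fockCre_smul, ← tsum_mul_left]
  refine tsum_congr fun x => ?_
  rw [Pi.smul_apply, smul_eq_mul, norm_mul, mul_pow, Complex.norm_real,
    Real.norm_of_nonneg (exp_pos _).le, sq, ← exp_add]
  ring_nf

theorem tsum_norm_sq_fockCre_fockAnn_fockGibbs_fockBasis_le {ω : ℕ → ℝ} {m : ℝ} (hm : 0 < m)
    (hω : ∀ k, m ≤ ω k) (hf : Summable fun k => ‖f k‖ ^ 2) (β : ℝ) (n : ℕ →₀ ℕ) :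
    ∑' x, ‖fockCre f (fockAnn f (fockGibbs β ω (fockBasis n))) x‖ ^ 2 ≤
      (∑' k, ‖f k‖ ^ 2) ^ 2 * (1 / m ^ 2 * (weight ω n ^ 2 * exp (-(2 * β) * weight ω n)) +
        1 / m * (weight ω n * exp (-(2 * β) * weight ω n))) := by
  have hN : (n.degree : ℝ) ≤ weight ω n / m := by
    rw [le_div_iff₀ hm, mul_comm]
    exact mul_degree_le_weight hω n
  have hN2 : (n.degree : ℝ) ^ 2 ≤ (weight ω n / m) ^ 2 := pow_le_pow_left₀ (Nat.cast_nonneg _) hN 2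
  rw [tsum_norm_sq_fockCre_fockAnn_fockGibbs_fockBasis]
  calc exp (-(2 * β) * weight ω n) * ∑' x, ‖fockCre f (fockAnn f (fockBasis n)) x‖ ^ 2
      ≤ exp (-(2 * β) * weight ω n) * ((∑' k, ‖f k‖ ^ 2) ^ 2 * ((n.degree : ℝ) ^ 2 + n.degree)) :=
        mul_le_mul_of_nonneg_left (tsum_norm_sq_fockCre_fockAnn_fockBasis_le hf n) (exp_pos _).le
    _ ≤ exp (-(2 * β) * weight ω n) * ((∑' k, ‖f k‖ ^ 2) ^ 2 *
          ((weight ω n / m) ^ 2 + weight ω n / m)) := by gcongr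
    _ = _ := by ring

end HilbertSchmidt

theorem hs_bound_cre_ann_gibbs_general (ω : ℕ → ℝ) (f : ℕ → ℂ) (m β : ℝ) (hm : 0 < m) (hω : ∀ k, m ≤ ω k) (hβ : 0 < β)
    (hf : Summable fun k => ‖f k‖ ^ 2)
    (hsum : ∀ b > (0 : ℝ), Summable fun k => Real.exp (-b * ω k)) :
    (∑' n : ℕ →₀ ℕ, ∑' x : ℕ →₀ ℕ,
        ‖fockCre f (fockAnn f (fockGibbs β ω (fockBasis n))) x‖ ^ 2) ≤
      (∑' k : ℕ, ‖f k‖ ^ 2) ^ 2 *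
        ((1 / m ^ 2) * deriv (deriv (Ztr ω)) (2 * β) -
          (1 / m) * deriv (Ztr ω) (2 * β)) := by
  have hβ2 : 0 < 2 * β := by linarith
  have hS : ∀ p, Summable fun n : ℕ →₀ ℕ =>
      Finsupp.weight ω n ^ p * exp (-(2 * β) * Finsupp.weight ω n) := fun p =>
    summable_pow_mul_exp_neg (weight_nonneg_of_le hm.le hω)
      (fun _ => summable_exp_neg_mul_weight hm hω hsum) p hβ2
  have hbound := tsum_norm_sq_fockCre_fockAnn_fockGibbs_fockBasis_le hm hω hf β
  have hS1 : Summable fun n : ℕ →₀ ℕ =>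
      Finsupp.weight ω n * exp (-(2 * β) * Finsupp.weight ω n) := by
    simpa only [pow_one] using hS 1
  have hR := (((hS 2).mul_left (1 / m ^ 2)).add (hS1.mul_left (1 / m))).mul_left
    ((∑' k, ‖f k‖ ^ 2) ^ 2)
  calc (∑' n : ℕ →₀ ℕ, ∑' x, ‖fockCre f (fockAnn f (fockGibbs β ω (fockBasis n))) x‖ ^ 2)
      ≤ ∑' n : ℕ →₀ ℕ, (∑' k, ‖f k‖ ^ 2) ^ 2 *
          (1 / m ^ 2 * (Finsupp.weight ω n ^ 2 * exp (-(2 * β) * Finsupp.weight ω n)) +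
            1 / m * (Finsupp.weight ω n * exp (-(2 * β) * Finsupp.weight ω n))) :=
        Summable.tsum_le_tsum hbound
          (hR.of_nonneg_of_le (fun n => tsum_nonneg fun x => sq_nonneg _) hbound) hR
    _ = _ := by
        rw [tsum_mul_left, (hS 2).mul_left _ |>.tsum_add (hS1.mul_left _), tsum_mul_left,
          tsum_mul_left, deriv_deriv_Ztr hm hω hsum hβ2, (hasDerivAt_Ztr hm hω hsum hβ2).deriv]
        ring

/-- **Hilbert–Schmidt bound:**
`‖a†(f)a(f) e^{−βH_B}‖²_HS ≤ ‖f‖⁴ [ (1/m²)(d²/d(2β)²) − (1/m)(d/d(2β)) ] Z(2β)`. -/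
theorem hs_bound_cre_ann_gibbs (ω : ℕ → ℝ) (f : ℕ → ℂ) (m β : ℝ) (hm : 0 < m) (hω : ∀ k, m ≤ ω k) (hβ : 0 < β)
    (hf : Summable fun k => ‖f k‖ ^ 2)
    (hsum : ∀ b > (0 : ℝ), Summable fun k => Real.exp (-b * ω k))
    (hp : ∀ p : ℕ, p ≤ 2 → Summable fun k => ω k ^ p * Real.exp (-(2 * β) * ω k))
    (hZ : Summable fun n : ℕ →₀ ℕ => Real.exp (-(2 * β) * (n.sum fun k v => ω k * (v : ℝ))))
    (hdiff : DifferentiableAt ℝ (Ztr ω) (2 * β))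
    (hdiff2 : DifferentiableAt ℝ (deriv (Ztr ω)) (2 * β)) :
    (∑' n : ℕ →₀ ℕ, ∑' x : ℕ →₀ ℕ,
        ‖fockCre f (fockAnn f (fockGibbs β ω (fockBasis n))) x‖ ^ 2) ≤
      (∑' k : ℕ, ‖f k‖ ^ 2) ^ 2 *
        ((1 / m ^ 2) * deriv (deriv (Ztr ω)) (2 * β) -
          (1 / m) * deriv (Ztr ω) (2 * β)) :=
  hs_bound_cre_ann_gibbs_general ω f m β hm hω hβ hf hsum
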